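/- Attractors of 𝔹(Γ) map surjectively via ψ onto attractors of Γ: the image under ψ of any attractor of 𝔹(Γ) is an attractor of Γ, and every attractor of Γ arises this way. -/

import Mathlib

/-!
Common setup: multilevel discrete networks (Faure–Kaji, "A circuit-preserving
mapping from multilevel to Boolean dynamics").

A gene `i` takes levels in `{0,...,b i}`, encoded as `Fin (b i + 1)`.
The Boolean case is `b i = 1`.
-/

namespace GRN

section Generic

variable {ι : Type*} [Fintype ι] [DecidableEq ι] (b : ι → ℕ)

/-- the state space `∏ i {0,…,b i}` -/
abbrev GState := ∀ i : ι, Fin (b i + 1)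

/-- L¹ distance between states -/
def dist1 (x x' : GState b) : ℕ := ∑ i, Nat.dist (x i : ℕ) (x' i : ℕ)

/-- edge relation of the asynchronous state transition graph `Γ(f)` -/
def stgEdge (f : GState b → GState b) (x x' : GState b) : Prop :=
  ∃ j : ι, (∀ k, k ≠ j → x' k = x k) ∧
    (((x j : ℕ) < (f x j : ℕ) ∧ (x' j : ℕ) = (x j : ℕ) + 1) ∨
     ((f x j : ℕ) < (x j : ℕ) ∧ (x' j : ℕ) + 1 = (x j : ℕ)))

/-- a grid graph: every edge joins states at distance one, and there are no
two parallel outward edges at any vertex -/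
def IsGridGraph (E : GState b → GState b → Prop) : Prop :=
  (∀ x x', E x x' → dist1 b x x' = 1) ∧
  (∀ (x x' x'' : GState b) (j : ι), E x x' → E x x'' →
    (∀ k, k ≠ j → x' k = x k) → (∀ k, k ≠ j → x'' k = x k) → x' = x'')

/-- asymptotic evolution function: `f i x ∈ {0, x i, b i}` -/
def Asymptotic (f : GState b → GState b) : Prop :=
  ∀ (x : GState b) (i : ι), (f x i : ℕ) = 0 ∨ f x i = x i ∨ (f x i : ℕ) = b i

/-- stepwise (unitary) evolution function: `|f i x - x i| ≤ 1` -/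
def Stepwise (f : GState b → GState b) : Prop :=
  ∀ (x : GState b) (i : ι), (f x i : ℕ) ≤ (x i : ℕ) + 1 ∧ (x i : ℕ) ≤ (f x i : ℕ) + 1

/-- the asymptotic function `f̄` associated with `f` -/
def asym (f : GState b → GState b) : GState b → GState b := fun x i =>
  if (x i : ℕ) < (f x i : ℕ) then Fin.last (b i)
  else if (f x i : ℕ) < (x i : ℕ) then 0 else x i

/-- the stepwise function `f̂` associated with `f` -/
def stepw (f : GState b → GState b) : GState b → GState b := fun x i =>
  if h : (x i : ℕ) < (f x i : ℕ) then ⟨(x i : ℕ) + 1, Nat.lt_of_le_of_lt h (f x i).isLt⟩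
  else if (f x i : ℕ) < (x i : ℕ) then
    ⟨(x i : ℕ) - 1, lt_of_le_of_lt (Nat.sub_le _ _) (x i).isLt⟩
  else x i

/-- `x + e j` (defined when `x j < b j`) -/
def bump (x : GState b) (j : ι) (h : (x j : ℕ) < b j) : GState b :=
  Function.update x j ⟨(x j : ℕ) + 1, Nat.succ_lt_succ h⟩

/-- `x - e j` -/
def drop (x : GState b) (j : ι) : GState b :=
  Function.update x j ⟨(x j : ℕ) - 1, lt_of_le_of_lt (Nat.sub_le _ _) (x j).isLt⟩

/-- positive edge `j → i` in the local interaction graph `Gf(x)`: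
`∂⁺ⱼfᵢ(x) > 0` or `∂⁻ⱼfᵢ(x) > 0` -/
def PosEdge (f : GState b → GState b) (x : GState b) (j i : ι) : Prop :=
  (∃ h : (x j : ℕ) < b j, (f x i : ℕ) < (f (bump b x j h) i : ℕ)) ∨
  (0 < (x j : ℕ) ∧ (f (drop b x j) i : ℕ) < (f x i : ℕ))

/-- negative edge `j → i` in the local interaction graph `Gf(x)` -/
def NegEdge (f : GState b → GState b) (x : GState b) (j i : ι) : Prop :=
  (∃ h : (x j : ℕ) < b j, (f (bump b x j h) i : ℕ) < (f x i : ℕ)) ∨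
  (0 < (x j : ℕ) ∧ (f x i : ℕ) < (f (drop b x j) i : ℕ))

/-- an edge with sign `s` (`true` = negative) -/
def SignedEdge (f : GState b → GState b) (x : GState b) (s : Bool) (j i : ι) : Prop :=
  if s then NegEdge b f x j i else PosEdge b f x j i

/-- a type-1 functional circuit at `x`, negative iff `neg`: a cycle (with
pairwise-distinct vertices) in the local interaction graph `Gf(x)` whose number
of negative edges is odd iff `neg` -/
def HasType1Circuit (f : GState b → GState b) (x : GState b) (neg : Bool) : Prop :=
  ∃ (k : ℕ) (v : Fin (k + 1) → ι) (s : Fin (k + 1) → Bool),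
    Function.Injective v ∧
    (∀ t, SignedEdge b f x (s t) (v t) (v (t + 1))) ∧
    (Odd (Finset.univ.filter fun t => s t = true).card ↔ neg = true)

/-- mutual reachability -/
def InSameSCC (E : GState b → GState b → Prop) (x y : GState b) : Prop :=
  Relation.ReflTransGen E x y ∧ Relation.ReflTransGen E y x

/-- the strongly connected component of `x` -/
def sccOf (E : GState b → GState b → Prop) (x : GState b) : Set (GState b) :=
  {y | InSameSCC b E x y}

/-- attractor: terminal strongly connected set of states -/
def IsAttractor (E : GState b → GState b → Prop) (A : Set (GState b)) : Prop :=
  A.Nonempty ∧ (∀ x ∈ A, ∀ y ∈ A, Relation.ReflTransGen E x y) ∧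
  (∀ x ∈ A, ∀ y, E x y → y ∈ A)

/-- stable state: no outgoing edges -/
def IsStable (E : GState b → GState b → Prop) (x : GState b) : Prop :=
  ∀ y, ¬ E x y

end Generic

section Binarisation

variable {n : ℕ} {m : Fin n → ℕ}

/-- index set of the Boolean state space `𝔹^(m₁+⋯+mₙ)` -/
abbrev BIdx (m : Fin n → ℕ) := Σ i : Fin n, Fin (m i)

/-- all maximal levels equal to 1 -/
abbrev bOne (m : Fin n → ℕ) : BIdx m → ℕ := fun _ => 1

/-- the Boolean state space `𝔹^(m₁+⋯+mₙ)` -/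
abbrev BState (m : Fin n → ℕ) := GState (bOne m)

/-- the surjection `ψ : 𝔹^(m₁+⋯+mₙ) → M`, counting ones in each block -/
def psi (x : BState m) : GState m := fun i =>
  ⟨∑ j : Fin (m i), (x ⟨i, j⟩ : ℕ), Nat.lt_succ_of_le (by
    calc ∑ j : Fin (m i), (x ⟨i, j⟩ : ℕ) ≤ ∑ _j : Fin (m i), 1 :=
          Finset.sum_le_sum (fun j _ => Nat.lt_succ_iff.mp (x ⟨i, j⟩).isLt)
      _ = m i := by simp)⟩

/-- Van Ham's embedding `b₀ : M → 𝔹^(m₁+⋯+mₙ)`: level `k` ↦ `k` ones then zeros -/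
def vanHam (y : GState m) : BState m := fun p =>
  if (p.2 : ℕ) < (y p.1 : ℕ) then 1 else 0

/-- the binarisation `𝔹(f)` of an (asymptotic) evolution function `f` -/
def binf (f : GState m → GState m) : BState m → BState m := fun x p =>
  if (psi x p.1 : ℕ) < (f (psi x) p.1 : ℕ) then 1
  else if (f (psi x) p.1 : ℕ) < (psi x p.1 : ℕ) then 0
  else x p

/-- the binarisation `𝔹(Γ)` of a grid graph over `M`:
edge `x → x'` iff `d(x,x') = 1` and `ψ(x) → ψ(x')` in `Γ` -/
def binGraph (E : GState m → GState m → Prop) : BState m → BState m → Prop :=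
  fun x x' => dist1 (bOne m) x x' = 1 ∧ E (psi x) (psi x')

/-- the action of `𝕊 = ∏ᵢ S_{mᵢ}` on `𝔹^(m₁+⋯+mₙ)` permuting blocks coordinatewise -/
def act (σ : ∀ i : Fin n, Equiv.Perm (Fin (m i))) (x : BState m) : BState m :=
  fun p => x ⟨p.1, σ p.1 p.2⟩

/-- `𝕊`-symmetric Boolean evolution function -/
def SSym (g : BState m → BState m) : Prop :=
  ∀ (σ : ∀ i : Fin n, Equiv.Perm (Fin (m i))) (x : BState m) (p : BIdx m),
    g (act σ x) p = g x ⟨p.1, σ p.1 p.2⟩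

end Binarisation

/-!
`ψ` maps edges of `𝔹(Γ)` to edges of `Γ`. Conversely, an edge of `Γ` leaving `ψ x` moves one
block by one level, so it lifts to an edge of `𝔹(Γ)` leaving `x` that flips a single bit of that
block. Hence `ψ` maps attractors to attractors. Given an attractor `C` of `Γ`, take a preimage of
one of its points and an attractor `A` of the finite graph `𝔹(Γ)` reachable from it: `ψ '' A`
is an attractor reachable from `C`, so contained in `C`, and an attractor contained in another
is equal to it.
-/

section Attractors

variable {ι : Type*} {b : ι → ℕ} {E : GState b → GState b → Prop} {A C : Set (GState b)}

theorem IsAttractor.mem_of_reflTransGen (hA : IsAttractor b E A) {x y : GState b}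
    (hx : x ∈ A) (hxy : Relation.ReflTransGen E x y) : y ∈ A := by
  induction hxy with
  | refl => exact hx
  | tail _ hyz ih => exact hA.2.2 _ ih _ hyz

theorem IsAttractor.eq_of_subset (hA : IsAttractor b E A) (hC : IsAttractor b E C)
    (hAC : A ⊆ C) : A = C := by
  refine hAC.antisymm fun c hc => ?_
  obtain ⟨a, ha⟩ := hA.1
  exact hA.mem_of_reflTransGen ha (hC.2.1 a (hAC ha) c hc)

variable (E) in
theorem exists_isAttractor_reachable [Fintype ι] (x : GState b) :
    ∃ A, IsAttractor b E A ∧ ∀ z ∈ A, Relation.ReflTransGen E x z := by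
  let reach : GState b → Set (GState b) := fun y => {z | Relation.ReflTransGen E y z}
  obtain ⟨y, hxy, hmin⟩ := Set.exists_min_image (reach x) (fun y => (reach y).ncard)
    (Set.toFinite _) ⟨x, .refl⟩
  -- `y` has a reachable set of minimal size, so every `z` it reaches reaches all of it.
  have hback : ∀ z ∈ reach y, Relation.ReflTransGen E z y := fun z hyz => by
    have hsub : reach z ⊆ reach y := fun w hzw => hyz.trans hzw
    have heq := Set.eq_of_subset_of_ncard_le hsub (hmin z (hxy.trans hyz))
    have hzy : y ∈ reach z := heq ▸ Relation.ReflTransGen.refl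
    exact hzy
  refine ⟨reach y, ⟨⟨y, .refl⟩, fun a ha c hc => (hback a ha).trans hc,
    fun a ha c hac => Relation.ReflTransGen.tail ha hac⟩, fun z hz => hxy.trans hz⟩

theorem IsAttractor.image {ι' : Type*} {b' : ι' → ℕ} {E' : GState b' → GState b' → Prop}
    (f : GState b → GState b') (hf : ∀ x y, E x y → E' (f x) (f y))
    (hlift : ∀ x y', E' (f x) y' → ∃ y, E x y ∧ f y = y') (hA : IsAttractor b E A) :
    IsAttractor b' E' (f '' A) := by
  refine ⟨hA.1.image f, ?_, ?_⟩
  · rintro _ ⟨x, hx, rfl⟩ _ ⟨y, hy, rfl⟩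
    exact Relation.ReflTransGen.lift f hf _ _ (hA.2.1 x hx y hy)
  · rintro _ ⟨x, hx, rfl⟩ y' hxy'
    obtain ⟨y, hxy, rfl⟩ := hlift x y' hxy'
    exact ⟨y, hA.2.2 x hx y hxy, rfl⟩

end Attractors

theorem exists_eq_one_of_sum_eq_one {α : Type*} [Fintype α] [DecidableEq α] (f : α → ℕ)
    (h : ∑ a, f a = 1) : ∃ a, f a = 1 ∧ ∀ a', a' ≠ a → f a' = 0 := by
  obtain ⟨a, -, ha⟩ := Finset.exists_ne_zero_of_sum_ne_zero (h ▸ one_ne_zero)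
  rw [← Finset.add_sum_erase _ _ (Finset.mem_univ a)] at h
  have hrest : ∑ a' ∈ Finset.univ.erase a, f a' = 0 := by omega
  rw [Finset.sum_eq_zero_iff] at hrest
  exact ⟨a, by omega, fun a' ha' => hrest a' (by simp [ha'])⟩

theorem exists_dist_eq_one_of_dist1_eq_one {ι : Type*} [Fintype ι] [DecidableEq ι]
    {b : ι → ℕ} {x y : GState b} (h : dist1 b x y = 1) :
    ∃ i, Nat.dist (x i) (y i) = 1 ∧ ∀ k, k ≠ i → y k = x k := by
  obtain ⟨i, hi, hrest⟩ := exists_eq_one_of_sum_eq_one _ h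
  exact ⟨i, hi, fun k hk => (Fin.ext (Nat.eq_of_dist_eq_zero (hrest k hk))).symm⟩

theorem dist1_update_self {ι : Type*} [Fintype ι] [DecidableEq ι] {b : ι → ℕ} (x : GState b)
    (p : ι) (v : Fin (b p + 1)) : dist1 b x (Function.update x p v) = Nat.dist (x p) v := by
  rw [dist1, Finset.sum_eq_single p (fun q _ hq => by simp [Function.update_of_ne hq]) (by simp),
    Function.update_self]

section Binarisation

variable {n : ℕ} {m : Fin n → ℕ}

theorem psi_vanHam (c : GState m) : psi (vanHam c) = c := by
  funext i
  ext
  have hc : (c i : ℕ) ≤ m i := Nat.lt_succ_iff.mp (c i).isLt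
  have hlevels : (Finset.range (m i)).filter (· < (c i : ℕ)) = Finset.range (c i) := by
    ext j
    simp only [Finset.mem_filter, Finset.mem_range]
    omega
  simp [psi, vanHam, apply_ite, hlevels,
    Fin.sum_univ_eq_sum_range (fun j => if j < (c i : ℕ) then 1 else 0)]

theorem psi_surjective : Function.Surjective (psi (m := m)) :=
  fun c => ⟨vanHam c, psi_vanHam c⟩

theorem psi_update_of_ne (x : BState m) {i k : Fin n} (j : Fin (m i)) (v : Fin 2) (hk : k ≠ i) :
    psi (Function.update x ⟨i, j⟩ v) k = psi x k := by
  ext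
  simp [psi, Function.update_of_ne, hk]

theorem psi_update_self (x : BState m) (i : Fin n) (j : Fin (m i)) (v : Fin 2) :
    (psi (Function.update x ⟨i, j⟩ v) i : ℕ) + x ⟨i, j⟩ = psi x i + v := by
  have hblock : (fun j' => (Function.update x ⟨i, j⟩ v ⟨i, j'⟩ : ℕ)) =
      Function.update (fun j' => (x ⟨i, j'⟩ : ℕ)) j v := by
    funext j'
    by_cases hj : j' = j
    · subst hj; simp
    · simp [hj]
  simp only [psi, hblock, Finset.sum_update_of_mem (Finset.mem_univ j)]
  rw [Finset.sum_eq_add_sum_sdiff_singleton_of_mem (Finset.mem_univ j)]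
  ring

theorem bit_lt_two (x : BState m) (p : BIdx m) : (x p : ℕ) < 2 := (x p).isLt

theorem exists_bit_eq_zero_of_psi_lt (x : BState m) {i : Fin n} (h : (psi x i : ℕ) < m i) :
    ∃ j, (x ⟨i, j⟩ : ℕ) = 0 := by
  by_contra! hne
  have hone : ∀ j, (x ⟨i, j⟩ : ℕ) = 1 := fun j => by
    have := bit_lt_two x ⟨i, j⟩
    have := hne j
    omega
  simp [psi, hone] at h

theorem exists_bit_eq_one_of_psi_pos (x : BState m) {i : Fin n} (h : 0 < (psi x i : ℕ)) :
    ∃ j, (x ⟨i, j⟩ : ℕ) = 1 := by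
  have hsum : ∑ j, (x ⟨i, j⟩ : ℕ) ≠ 0 := h.ne'
  obtain ⟨j, -, hj⟩ := Finset.exists_ne_zero_of_sum_ne_zero hsum
  have := bit_lt_two x ⟨i, j⟩
  exact ⟨j, by omega⟩

theorem exists_dist1_eq_one_psi_eq (x : BState m) {y : GState m} (h : dist1 m (psi x) y = 1) :
    ∃ x', dist1 (bOne m) x x' = 1 ∧ psi x' = y := by
  obtain ⟨i, hi, hrest⟩ := exists_dist_eq_one_of_dist1_eq_one h
  suffices ∃ (j : Fin (m i)) (v : Fin 2),
      Nat.dist (x ⟨i, j⟩) v = 1 ∧ (y i : ℕ) + x ⟨i, j⟩ = psi x i + v by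
    obtain ⟨j, v, hjv, hyi⟩ := this
    refine ⟨Function.update x ⟨i, j⟩ v, (dist1_update_self x _ v).trans hjv,
      funext fun k => ?_⟩
    by_cases hk : k = i
    · subst hk
      ext
      have := psi_update_self x k j v
      omega
    · rw [psi_update_of_ne x j v hk, hrest k hk]
  have hyi : (y i : ℕ) = psi x i + 1 ∨ (psi x i : ℕ) = y i + 1 := by
    unfold Nat.dist at hi
    omega
  rcases hyi with hup | hdown
  · have := (y i).isLt
    obtain ⟨j, hj⟩ := exists_bit_eq_zero_of_psi_lt x (i := i) (by omega)
    exact ⟨j, 1, by rw [hj]; rfl, by simp [hj, hup]⟩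
  · obtain ⟨j, hj⟩ := exists_bit_eq_one_of_psi_pos x (i := i) (by omega)
    exact ⟨j, 0, by rw [hj]; rfl, by simp [hj, hdown]⟩

theorem exists_binGraph_psi_eq {E : GState m → GState m → Prop}
    (hE : ∀ y y', E y y' → dist1 m y y' = 1) (x : BState m) {y : GState m} (hxy : E (psi x) y) :
    ∃ x', binGraph E x x' ∧ psi x' = y := by
  obtain ⟨x', hd, rfl⟩ := exists_dist1_eq_one_psi_eq x (hE _ _ hxy)
  exact ⟨x', ⟨hd, hxy⟩, rfl⟩

theorem isAttractor_image_psi {E : GState m → GState m → Prop}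
    (hE : ∀ y y', E y y' → dist1 m y y' = 1) {A : Set (BState m)}
    (hA : IsAttractor (bOne m) (binGraph E) A) : IsAttractor m E (psi '' A) :=
  hA.image psi (fun _ _ hxy => hxy.2) fun x _ hxy => exists_binGraph_psi_eq hE x hxy

end Binarisation

/-- attractors of `𝔹(Γ)` map surjectively via `ψ` onto
attractors of `Γ`. -/
theorem attractors_surjective
    {n : ℕ} {m : Fin n → ℕ} (E : GState m → GState m → Prop)
    (hE : IsGridGraph m E) :
    (∀ A : Set (BState m), IsAttractor (bOne m) (binGraph E) A →
      IsAttractor m E (psi '' A)) ∧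
    (∀ C : Set (GState m), IsAttractor m E C →
      ∃ A : Set (BState m), IsAttractor (bOne m) (binGraph E) A ∧ psi '' A = C) := by
  refine ⟨fun A hA => isAttractor_image_psi hE.1 hA, fun C hC => ?_⟩
  obtain ⟨c, hc⟩ := hC.1
  obtain ⟨x, rfl⟩ := psi_surjective c
  obtain ⟨A, hA, hreach⟩ := exists_isAttractor_reachable (binGraph E) x
  refine ⟨A, hA, (isAttractor_image_psi hE.1 hA).eq_of_subset hC ?_⟩
  rintro _ ⟨z, hz, rfl⟩
  exact hC.mem_of_reflTransGen hc
    (Relation.ReflTransGen.lift psi (fun _ _ hxy => hxy.2) _ _ (hreach z hz))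

end GRN
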